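/- arXiv:1011.2410 — 4 statements merged into one kernel-verified Lean document; each statement's English description precedes it below -/
import Mathlib

section
/- Let l, b₀, c₀, M₁₀, M₂₀ be real constants with l ≠ 0, b₀ ≠ 0, and l ≠ b₀, and let M(t) = (M₁₀cos(b₀t)+M₂₀sin(b₀t), M₂₀cos(b₀t)−M₁₀sin(b₀t)). Then the explicit functions X₁(t) = X₁(0)+V₂(0)/l+c₀M₁₀/(b₀l) + (V₁(0)/l − c₀M₂₀/(l(b₀−l)))sin(lt) − (V₂(0)/l + c₀M₁₀/(l(b₀−l)))cos(lt) + c₀M₂₀/(b₀(b₀−l))·sin(b₀t) + c₀M₁₀/(b₀(b₀−l))·cos(b₀t) and X₂(t) = X₂(0)−V₁(0)/l+c₀M₂₀/(b₀l) + (V₂(0)/l + c₀M₁₀/(l(b₀−l)))sin(lt) + (V₁(0)/l − c₀M₂₀/(l(b₀−l)))cos(lt) − c₀M₁₀/(b₀(b₀−l))·sin(b₀t) + c₀M₂₀/(b₀(b₀−l))·cos(b₀t) solve the ODE system Ẍ(t) + l·L·Ẋ(t) + c₀M(t) = 0 with Ẋ(0) = (V₁(0),V₂(0)), where L is the rotation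 matrix with rows (0,−1),(1,0). -/
open Real

/-- First component of the explicit trajectory. -/
noncomputable def X1sol (l b₀ c₀ M₁₀ M₂₀ X10 V1 V2 : ℝ) (t : ℝ) : ℝ :=
  X10 + V2 / l + c₀ * M₁₀ / (b₀ * l)
  + (V1 / l - c₀ * M₂₀ / (l * (b₀ - l))) * Real.sin (l * t)
  - (V2 / l + c₀ * M₁₀ / (l * (b₀ - l))) * Real.cos (l * t)
  + c₀ * M₂₀ / (b₀ * (b₀ - l)) * Real.sin (b₀ * t)
  + c₀ * M₁₀ / (b₀ * (b₀ - l)) * Real.cos (b₀ * t)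

/-- Second component of the explicit trajectory. -/
noncomputable def X2sol (l b₀ c₀ M₁₀ M₂₀ X20 V1 V2 : ℝ) (t : ℝ) : ℝ :=
  X20 - V1 / l + c₀ * M₂₀ / (b₀ * l)
  + (V2 / l + c₀ * M₁₀ / (l * (b₀ - l))) * Real.sin (l * t)
  + (V1 / l - c₀ * M₂₀ / (l * (b₀ - l))) * Real.cos (l * t)
  - c₀ * M₁₀ / (b₀ * (b₀ - l)) * Real.sin (b₀ * t)
  + c₀ * M₂₀ / (b₀ * (b₀ - l)) * Real.cos (b₀ * t)

/-!
Each component of the trajectory is a constant plus one sinusoid of frequency `l` and one of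
frequency `b₀`. Differentiating a sinusoid rotates its coefficient vector `(a, b)` to `ω • (-b, a)`,
so both sides of the ODE are explicit combinations of `sin (l t), cos (l t), sin (b₀ t), cos (b₀ t)`,
and their coefficients cancel once the denominators `l`, `b₀`, `b₀ - l` are cleared.
-/

noncomputable def sinusoid (a b ω t : ℝ) : ℝ :=
  a * sin (ω * t) + b * cos (ω * t)

theorem hasDerivAt_sinusoid (a b ω t : ℝ) :
    HasDerivAt (sinusoid a b ω) (sinusoid (-(ω * b)) (ω * a) ω t) t := by
  have hω : HasDerivAt (fun t : ℝ => ω * t) ω t := by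
    simpa using (hasDerivAt_id t).const_mul ω
  have h : HasDerivAt (sinusoid a b ω) (a * (cos (ω * t) * ω) + b * (-sin (ω * t) * ω)) t :=
    (((hasDerivAt_sin _).comp t hω).const_mul a).add (((hasDerivAt_cos _).comp t hω).const_mul b)
  convert h using 1
  simp only [sinusoid]
  ring

theorem deriv_sinusoid_add_sinusoid (a b ω c d ν : ℝ) :
    deriv (fun t => sinusoid a b ω t + sinusoid c d ν t) =
      fun t => sinusoid (-(ω * b)) (ω * a) ω t + sinusoid (-(ν * d)) (ν * c) ν t :=
  funext fun t => ((hasDerivAt_sinusoid a b ω t).add (hasDerivAt_sinusoid c d ν t)).deriv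

theorem X1sol_eq_const_add_sinusoids (l b₀ c₀ M₁₀ M₂₀ X10 V1 V2 : ℝ) :
    X1sol l b₀ c₀ M₁₀ M₂₀ X10 V1 V2 = fun t => (X10 + V2 / l + c₀ * M₁₀ / (b₀ * l)) +
      (sinusoid (V1 / l - c₀ * M₂₀ / (l * (b₀ - l))) (-(V2 / l + c₀ * M₁₀ / (l * (b₀ - l)))) l t
        + sinusoid (c₀ * M₂₀ / (b₀ * (b₀ - l))) (c₀ * M₁₀ / (b₀ * (b₀ - l))) b₀ t) := by
  funext t
  simp only [X1sol, sinusoid]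
  ring

theorem X2sol_eq_const_add_sinusoids (l b₀ c₀ M₁₀ M₂₀ X20 V1 V2 : ℝ) :
    X2sol l b₀ c₀ M₁₀ M₂₀ X20 V1 V2 = fun t => (X20 - V1 / l + c₀ * M₂₀ / (b₀ * l)) +
      (sinusoid (V2 / l + c₀ * M₁₀ / (l * (b₀ - l))) (V1 / l - c₀ * M₂₀ / (l * (b₀ - l))) l t
        + sinusoid (-(c₀ * M₁₀ / (b₀ * (b₀ - l)))) (c₀ * M₂₀ / (b₀ * (b₀ - l))) b₀ t) := by
  funext t
  simp only [X2sol, sinusoid]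
  ring

/-- The explicit formulas solve `Ẍ + l L Ẋ + c₀ M(t) = 0` with `Ẋ(0) = (V₁,V₂)`,
where `L(a,b) = (−b,a)` and `M(t)` is the rotating slope of the bearing field. -/
theorem explicit_trajectory_solves_ODE
    (l b₀ c₀ M₁₀ M₂₀ X10 X20 V1 V2 : ℝ)
    (hl : l ≠ 0) (hb : b₀ ≠ 0) (hlb : l ≠ b₀) :
    (∀ t : ℝ,
      deriv (deriv (X1sol l b₀ c₀ M₁₀ M₂₀ X10 V1 V2)) t
        - l * deriv (X2sol l b₀ c₀ M₁₀ M₂₀ X20 V1 V2) t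
        + c₀ * (M₁₀ * Real.cos (b₀ * t) + M₂₀ * Real.sin (b₀ * t)) = 0 ∧
      deriv (deriv (X2sol l b₀ c₀ M₁₀ M₂₀ X20 V1 V2)) t
        + l * deriv (X1sol l b₀ c₀ M₁₀ M₂₀ X10 V1 V2) t
        + c₀ * (M₂₀ * Real.cos (b₀ * t) - M₁₀ * Real.sin (b₀ * t)) = 0) ∧
    deriv (X1sol l b₀ c₀ M₁₀ M₂₀ X10 V1 V2) 0 = V1 ∧
    deriv (X2sol l b₀ c₀ M₁₀ M₂₀ X20 V1 V2) 0 = V2 := by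
  have hbl : b₀ - l ≠ 0 := sub_ne_zero.mpr hlb.symm
  simp only [X1sol_eq_const_add_sinusoids, X2sol_eq_const_add_sinusoids, deriv_const_add',
    deriv_sinusoid_add_sinusoid]
  refine ⟨fun t => ⟨?_, ?_⟩, ?_, ?_⟩ <;>
  · simp only [sinusoid, mul_zero, sin_zero, cos_zero, mul_one]
    field_simp
    ring
end

section
/- For any differentiable function G: ℝ² → ℝ, the function π₁(t,x₁,x₂) = G(x₁²+x₂², t − (1/(B₀σ))·e^{σ(x₁²+x₂²)/2}·arctan(x₁/x₂)) satisfies the transport equation ∂ₜπ₁ + u₁∂ₓ₁π₁ + u₂∂ₓ₂π₁ = 0 with the Gaussian vortex field u₁ = B₀σx₂e^{−σ(x₁²+x₂²)/2}, u₂ = −B₀σx₁e^{−σ(x₁²+x₂²)/2}, on the domain {x₂ ≠ 0}. -/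
open Real

noncomputable def pdx (g : ℝ → ℝ → ℝ) (a b : ℝ) : ℝ := deriv (fun s => g s b) a
noncomputable def pdy (g : ℝ → ℝ → ℝ) (a b : ℝ) : ℝ := deriv (fun s => g a s) b

/-! The solution is `G ∘ Φ` with `Φ(t, x) = (|x|², t - τ(x))`, and the transport operator
`∂ₜ + u·∇` is a derivation which kills both components of `Φ`: the field `u` is tangent to the
circles `|x|² = const`, and `τ` is the travel time along them, `u·∇τ = 1`. By the chain rule the
operator applied to `G ∘ Φ` is `DG(Φ)` applied to the vanishing vector of derivatives of `Φ`. -/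

theorem deriv_comp_add_smul_deriv_comp_eq_zero {E F : Type*} [NormedAddCommGroup E]
    [NormedSpace ℝ E] [NormedAddCommGroup F] [NormedSpace ℝ F] {G : E → F} {p : E}
    (hG : DifferentiableAt ℝ G p) {φ₀ φ₁ φ₂ : ℝ → E} {s₀ s₁ s₂ : ℝ} {v₀ v₁ v₂ : E}
    (h₀ : HasDerivAt φ₀ v₀ s₀) (h₁ : HasDerivAt φ₁ v₁ s₁) (h₂ : HasDerivAt φ₂ v₂ s₂)
    (hp₀ : φ₀ s₀ = p) (hp₁ : φ₁ s₁ = p) (hp₂ : φ₂ s₂ = p) (c₁ c₂ : ℝ)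
    (hv : v₀ + c₁ • v₁ + c₂ • v₂ = 0) :
    deriv (G ∘ φ₀) s₀ + c₁ • deriv (G ∘ φ₁) s₁ + c₂ • deriv (G ∘ φ₂) s₂ = 0 := by
  have hG₀ : HasFDerivAt G (fderiv ℝ G p) (φ₀ s₀) := hp₀ ▸ hG.hasFDerivAt
  have hG₁ : HasFDerivAt G (fderiv ℝ G p) (φ₁ s₁) := hp₁ ▸ hG.hasFDerivAt
  have hG₂ : HasFDerivAt G (fderiv ℝ G p) (φ₂ s₂) := hp₂ ▸ hG.hasFDerivAt
  rw [(hG₀.comp_hasDerivAt s₀ h₀).deriv, (hG₁.comp_hasDerivAt s₁ h₁).deriv,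
    (hG₂.comp_hasDerivAt s₂ h₂).deriv, ← map_smul, ← map_smul, ← map_add, ← map_add,
    hv, map_zero]

theorem hasDerivAt_arctan_div_left {a b : ℝ} (hb : b ≠ 0) :
    HasDerivAt (fun a => arctan (a / b)) (b / (a ^ 2 + b ^ 2)) a := by
  refine ((hasDerivAt_id' a).div_const b).arctan.congr_deriv ?_
  field_simp
  ring

theorem hasDerivAt_arctan_div_right {a b : ℝ} (hb : b ≠ 0) :
    HasDerivAt (fun b => arctan (a / b)) (-a / (a ^ 2 + b ^ 2)) b := by
  refine ((hasDerivAt_inv hb).const_mul a).arctan.congr_deriv ?_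
  field_simp
  ring

theorem hasDerivAt_exp_mul_sq_add_sq_left (k a b : ℝ) :
    HasDerivAt (fun a => exp (k * (a ^ 2 + b ^ 2)))
      (2 * k * a * exp (k * (a ^ 2 + b ^ 2))) a :=
  (((hasDerivAt_pow 2 a).add_const (b ^ 2)).const_mul k).exp.congr_deriv (by ring)

theorem hasDerivAt_exp_mul_sq_add_sq_right (k a b : ℝ) :
    HasDerivAt (fun b => exp (k * (a ^ 2 + b ^ 2)))
      (2 * k * b * exp (k * (a ^ 2 + b ^ 2))) b :=
  (((hasDerivAt_pow 2 b).const_add (a ^ 2)).const_mul k).exp.congr_deriv (by ring)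

/-- The angle `arctan (a / b)` divided by the angular speed `B₀ σ e^{-σ(a²+b²)/2}` of the vortex:
the time the flow takes to carry `(0, b')` to `(a, b)`, where `(0, b')` lies on the same circle
and in the same half plane `b ≷ 0`. -/
noncomputable def vortexTime (B₀ σ a b : ℝ) : ℝ :=
  1 / (B₀ * σ) * exp ((σ / 2) * (a ^ 2 + b ^ 2)) * arctan (a / b)

section vortexTime

variable {B₀ σ a b : ℝ}

theorem hasDerivAt_vortexTime_left (hb : b ≠ 0) :
    HasDerivAt (fun a => vortexTime B₀ σ a b) (1 / (B₀ * σ) * exp ((σ / 2) * (a ^ 2 + b ^ 2))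
      * (σ * a * arctan (a / b) + b / (a ^ 2 + b ^ 2))) a := by
  have h := ((hasDerivAt_exp_mul_sq_add_sq_left (σ / 2) a b).const_mul (1 / (B₀ * σ))).mul
    (hasDerivAt_arctan_div_left hb)
  exact h.congr_deriv (by ring)

theorem hasDerivAt_vortexTime_right (hb : b ≠ 0) :
    HasDerivAt (fun b => vortexTime B₀ σ a b) (1 / (B₀ * σ) * exp ((σ / 2) * (a ^ 2 + b ^ 2))
      * (σ * b * arctan (a / b) - a / (a ^ 2 + b ^ 2))) b := by
  have h := ((hasDerivAt_exp_mul_sq_add_sq_right (σ / 2) a b).const_mul (1 / (B₀ * σ))).mul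
    (hasDerivAt_arctan_div_right (a := a) hb)
  exact h.congr_deriv (by ring)

theorem vortex_mul_deriv_vortexTime_eq_one (hB : B₀ ≠ 0) (hσ : σ ≠ 0) (hb : b ≠ 0) :
    B₀ * σ * b * exp (-(σ / 2) * (a ^ 2 + b ^ 2)) * (1 / (B₀ * σ)
        * exp ((σ / 2) * (a ^ 2 + b ^ 2)) * (σ * a * arctan (a / b) + b / (a ^ 2 + b ^ 2)))
      + -(B₀ * σ * a * exp (-(σ / 2) * (a ^ 2 + b ^ 2))) * (1 / (B₀ * σ)
        * exp ((σ / 2) * (a ^ 2 + b ^ 2)) * (σ * b * arctan (a / b) - a / (a ^ 2 + b ^ 2)))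
      = 1 := by
  have hr : a ^ 2 + b ^ 2 ≠ 0 := by positivity
  rw [neg_mul, exp_neg]
  field_simp
  ring

end vortexTime

/-- The general solution of the transport equation with the Gaussian vortex field:
for any C¹ function `G`, the function
`π₁(t,x) = G(x₁²+x₂², t − (1/(B₀σ)) e^{σ(x₁²+x₂²)/2} arctan(x₁/x₂))`
satisfies `∂ₜπ₁ + u·∇π₁ = 0` on `{x₂ ≠ 0}`, where
`u = (B₀σx₂ e^{−σr²/2}, −B₀σx₁ e^{−σr²/2})`. -/
theorem gaussian_vortex_transport_general_solution
    (B₀ σ : ℝ) (hB : B₀ ≠ 0) (hσ : 0 < σ)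
    (G : ℝ × ℝ → ℝ) (hG : ContDiff ℝ 1 G)
    (π₁ : ℝ → ℝ → ℝ → ℝ)
    (hπ : ∀ t a b : ℝ, π₁ t a b =
      G (a ^ 2 + b ^ 2,
        t - (1 / (B₀ * σ)) * Real.exp ((σ / 2) * (a ^ 2 + b ^ 2)) * Real.arctan (a / b))) :
    ∀ t x₁ x₂ : ℝ, x₂ ≠ 0 →
      deriv (fun s => π₁ s x₁ x₂) t
        + (B₀ * σ * x₂ * Real.exp (-(σ / 2) * (x₁ ^ 2 + x₂ ^ 2))) * pdx (π₁ t) x₁ x₂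
        + (-(B₀ * σ * x₁ * Real.exp (-(σ / 2) * (x₁ ^ 2 + x₂ ^ 2)))) * pdy (π₁ t) x₁ x₂
        = 0 := by
  intro t x₁ x₂ hx₂
  set Φ : ℝ → ℝ → ℝ → ℝ × ℝ := fun t a b => (a ^ 2 + b ^ 2, t - vortexTime B₀ σ a b)
  obtain rfl : π₁ = fun t a b => G (Φ t a b) := by funext t a b; exact hπ t a b
  have hΦt : HasDerivAt (fun s => Φ s x₁ x₂) (0, 1) t :=
    (hasDerivAt_const t _).prodMk ((hasDerivAt_id t).sub_const _)
  have hΦa := ((hasDerivAt_pow 2 x₁).add_const (x₂ ^ 2)).prodMk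
    ((hasDerivAt_const x₁ t).sub (hasDerivAt_vortexTime_left (B₀ := B₀) (σ := σ) hx₂))
  have hΦb := ((hasDerivAt_pow 2 x₂).const_add (x₁ ^ 2)).prodMk
    ((hasDerivAt_const x₂ t).sub (hasDerivAt_vortexTime_right (B₀ := B₀) (σ := σ) (a := x₁) hx₂))
  refine deriv_comp_add_smul_deriv_comp_eq_zero
    ((hG.differentiable one_ne_zero) _) hΦt hΦa hΦb rfl rfl rfl _ _ ?_
  have htime := vortex_mul_deriv_vortexTime_eq_one (a := x₁) hB hσ.ne' hx₂
  ext
  · simp only [Prod.fst_add, Prod.smul_fst, smul_eq_mul, Prod.fst_zero]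
    ring
  · simp only [Prod.snd_add, Prod.smul_snd, smul_eq_mul, Prod.snd_zero]
    linear_combination -htime
end

section
/- For any twice differentiable f: ℝ → ℝ and constants a, b, h, the function Φ(λ,φ) = f(cos φ·(a sin λ + b cos λ) + h sin φ) solves the spherical master equation ∂²Φ/∂λ∂φ·((∂Φ/∂φ)² − (1/cos²φ)(∂Φ/∂λ)²) + ((1/cos²φ)∂²Φ/∂λ² − ∂²Φ/∂φ²)·(∂Φ/∂λ)(∂Φ/∂φ) − (sin φ/cos³φ)·(∂Φ/∂λ)³ = 0 at every point where cos φ ≠ 0. -/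
/-!
Write `Φ = f ∘ u` with `u(λ, φ) = cos φ (a sin λ + b cos λ) + h sin φ`, a linear function of ℝ³
restricted to the unit sphere. By the chain rule every first partial of `Φ` is `f' (u)`
times that of `u`, and every second partial is `f'' (u)` times a product of first partials of `u`
plus `f' (u)` times the second partial of `u`. In the master equation the `f''` terms cancel
identically, so its left-hand side for `Φ` is `f' (u) ^ 3` times its left-hand side for `u`, and
the latter vanishes by a direct trigonometric computation using `sin² φ + cos² φ = 1`.
-/

open Real

noncomputable def sphericalMaster (Φ : ℝ → ℝ → ℝ) (l p : ℝ) : ℝ :=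
  pdx (pdy Φ) l p *
      ((pdy Φ l p) ^ 2 - (1 / cos p ^ 2) * (pdx Φ l p) ^ 2)
    + ((1 / cos p ^ 2) * pdx (pdx Φ) l p
        - pdy (pdy Φ) l p) * (pdx Φ l p) * (pdy Φ l p)
    - (sin p / cos p ^ 3) * (pdx Φ l p) ^ 3

section ChainRule

variable {f : ℝ → ℝ} {u g : ℝ → ℝ → ℝ} {x y : ℝ}

theorem pdx_comp (hf : DifferentiableAt ℝ f (u x y))
    (hu : DifferentiableAt ℝ (fun s => u s y) x) :
    pdx (fun x y => f (u x y)) x y = deriv f (u x y) * pdx u x y :=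
  deriv_comp x hf hu

theorem pdy_comp (hf : DifferentiableAt ℝ f (u x y))
    (hu : DifferentiableAt ℝ (fun t => u x t) y) :
    pdy (fun x y => f (u x y)) x y = deriv f (u x y) * pdy u x y :=
  pdx_comp (u := fun x y => u y x) hf hu

theorem pdx_deriv_comp_mul (hf : ContDiff ℝ 2 f)
    (hu : DifferentiableAt ℝ (fun s => u s y) x) (hg : DifferentiableAt ℝ (fun s => g s y) x) :
    pdx (fun x y => deriv f (u x y) * g x y) x y
      = deriv (deriv f) (u x y) * pdx u x y * g x y + deriv f (u x y) * pdx g x y :=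
  (((hf.differentiable_deriv_two _).hasDerivAt.comp x hu.hasDerivAt).mul hg.hasDerivAt).deriv

theorem pdy_deriv_comp_mul (hf : ContDiff ℝ 2 f)
    (hu : DifferentiableAt ℝ (fun t => u x t) y) (hg : DifferentiableAt ℝ (fun t => g x t) y) :
    pdy (fun x y => deriv f (u x y) * g x y) x y
      = deriv (deriv f) (u x y) * pdy u x y * g x y + deriv f (u x y) * pdy g x y :=
  pdx_deriv_comp_mul (u := fun x y => u y x) (g := fun x y => g y x) hf hu hg

end ChainRule

theorem sphericalMaster_comp {f : ℝ → ℝ} {u : ℝ → ℝ → ℝ} {l p : ℝ} (hf : ContDiff ℝ 2 f)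
    (hux : ∀ x y, DifferentiableAt ℝ (fun s => u s y) x)
    (huy : ∀ x y, DifferentiableAt ℝ (fun t => u x t) y)
    (huxx : DifferentiableAt ℝ (fun s => pdx u s p) l)
    (huyx : DifferentiableAt ℝ (fun s => pdy u s p) l)
    (huyy : DifferentiableAt ℝ (fun t => pdy u l t) p) :
    sphericalMaster (fun x y => f (u x y)) l p = deriv f (u l p) ^ 3 * sphericalMaster u l p := by
  have hf1 : Differentiable ℝ f := hf.differentiable two_ne_zero
  have hΦx : pdx (fun x y => f (u x y)) = fun x y => deriv f (u x y) * pdx u x y :=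
    funext₂ fun x y => pdx_comp (hf1 _) (hux x y)
  have hΦy : pdy (fun x y => f (u x y)) = fun x y => deriv f (u x y) * pdy u x y :=
    funext₂ fun x y => pdy_comp (hf1 _) (huy x y)
  unfold sphericalMaster
  simp only [hΦx, hΦy, pdx_deriv_comp_mul hf (hux l p) huxx,
    pdx_deriv_comp_mul hf (hux l p) huyx, pdy_deriv_comp_mul hf (huy l p) huyy]
  ring

/-- In longitude/latitude coordinates, the restriction to the unit sphere of the linear function
`(X, Y, Z) ↦ b X + a Y + h Z`. -/
noncomputable def linearOnSphere (a b h : ℝ) (l p : ℝ) : ℝ :=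
  cos p * (a * sin l + b * cos l) + h * sin p

section LinearOnSphere

variable (a b h : ℝ)

theorem pdx_linearOnSphere :
    pdx (linearOnSphere a b h) = fun x y => cos y * (a * cos x - b * sin x) := by
  funext x y
  exact ((((hasDerivAt_sin x).const_mul a).add ((hasDerivAt_cos x).const_mul b)).const_mul
    (cos y)).add_const (h * sin y) |>.deriv.trans (by ring)

theorem pdy_linearOnSphere :
    pdy (linearOnSphere a b h) = fun x y => -sin y * (a * sin x + b * cos x) + h * cos y := by
  funext x y
  exact ((hasDerivAt_cos y).mul_const (a * sin x + b * cos x)).add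
    ((hasDerivAt_sin y).const_mul h) |>.deriv.trans (by ring)

theorem sphericalMaster_linearOnSphere {l p : ℝ} (hc : cos p ≠ 0) :
    sphericalMaster (linearOnSphere a b h) l p = 0 := by
  have hxx : pdx (pdx (linearOnSphere a b h)) l p = -cos p * (a * sin l + b * cos l) := by
    rw [pdx_linearOnSphere]
    exact (((hasDerivAt_cos l).const_mul a).sub ((hasDerivAt_sin l).const_mul b)).const_mul
      (cos p) |>.deriv.trans (by ring)
  have hyx : pdx (pdy (linearOnSphere a b h)) l p = -sin p * (a * cos l - b * sin l) := by
    rw [pdy_linearOnSphere]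
    exact ((((hasDerivAt_sin l).const_mul a).add ((hasDerivAt_cos l).const_mul b)).const_mul
      (-sin p)).add_const (h * cos p) |>.deriv.trans (by ring)
  have hyy : pdy (pdy (linearOnSphere a b h)) l p
      = -cos p * (a * sin l + b * cos l) - h * sin p := by
    rw [pdy_linearOnSphere]
    exact ((hasDerivAt_sin p).neg.mul_const (a * sin l + b * cos l)).add
      ((hasDerivAt_cos p).const_mul h) |>.deriv.trans (by ring)
  unfold sphericalMaster
  rw [hxx, hyx, hyy, pdx_linearOnSphere, pdy_linearOnSphere]
  field_simp
  linear_combination (a * cos l - b * sin l) * (a * sin l + b * cos l)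
    * (-sin p * (a * sin l + b * cos l) + h * cos p) * sin_sq_add_cos_sq p

theorem sphericalMaster_comp_linearOnSphere {f : ℝ → ℝ} (hf : ContDiff ℝ 2 f) (l p : ℝ) :
    sphericalMaster (fun x y => f (linearOnSphere a b h x y)) l p
      = deriv f (linearOnSphere a b h l p) ^ 3 * sphericalMaster (linearOnSphere a b h) l p := by
  refine sphericalMaster_comp hf (fun x y => ?_) (fun x y => ?_) ?_ ?_ ?_ <;>
    simp only [pdx_linearOnSphere, pdy_linearOnSphere, linearOnSphere] <;> fun_prop

end LinearOnSphere

/-- Every potential of the form `Φ(λ,φ) = f(cos φ (a sin λ + b cos λ) + h sin φ)`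
solves the spherical master equation at every point where `cos φ ≠ 0`. -/
theorem spherical_master_equation_solution
    (f : ℝ → ℝ) (hf : ContDiff ℝ 2 f) (a b h : ℝ)
    (Φ : ℝ → ℝ → ℝ)
    (hΦ : ∀ l p : ℝ, Φ l p =
      f (Real.cos p * (a * Real.sin l + b * Real.cos l) + h * Real.sin p)) :
    ∀ l p : ℝ, Real.cos p ≠ 0 →
      pdx (fun x y => pdy Φ x y) l p *
          ((pdy Φ l p) ^ 2 - (1 / Real.cos p ^ 2) * (pdx Φ l p) ^ 2)
        + ((1 / Real.cos p ^ 2) * pdx (fun x y => pdx Φ x y) l p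
            - pdy (fun x y => pdy Φ x y) l p) * (pdx Φ l p) * (pdy Φ l p)
        - (Real.sin p / Real.cos p ^ 3) * (pdx Φ l p) ^ 3 = 0 := by
  intro l p hc
  obtain rfl : Φ = fun x y => f (linearOnSphere a b h x y) := funext₂ hΦ
  change sphericalMaster _ l p = 0
  rw [sphericalMaster_comp_linearOnSphere a b h hf, sphericalMaster_linearOnSphere a b h hc,
    mul_zero]
end

section
/- If (Φ, π₀) solve the steady equation (∇⊥Φ·∇)∇⊥Φ + A∇⊥Φ + c₀∇π₀ = 0 with (∇π₀, ∇⊥Φ) = 0, π₁ solves ∂ₜπ₁ + (∇⊥Φ·∇)π₁ = 0, and X: ℝ → ℝ² solves Ẍ + l(X(t))LẊ + c₀∇π₁(t,x)|_{x=0} = 0, then the pair U(t,x) = Ẋ(t) + ∇⊥Φ(x−X(t)), π(t,x) = π₀(x−X(t)) + π₁(t, x−X(t)) satisfies the system ∂ₜU + (U·∇)U + l(x)LU + c₀∇π = Q and ∂ₜπ + (∇π·U) + (γ−1)π div U = 0, where Q(t,x) = −(l(X(t))−l(x))LẊ(t) + (l(x)L−A)∇⊥Φ(x−X(t)) − c₀[∇π₁(t,y)|_{y=0}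 − ∇π₁(t,x−X(t))]. -/
open Real

noncomputable def unc2 (g : ℝ → ℝ → ℝ) : ℝ × ℝ → ℝ := fun q => g q.1 q.2
noncomputable def unc3 (g : ℝ → ℝ → ℝ → ℝ) : ℝ × ℝ × ℝ → ℝ := fun q => g q.1 q.2.1 q.2.2

lemma secx {K : ℝ × ℝ → ℝ} {a b : ℝ} (hK : DifferentiableAt ℝ K (a, b)) :
    HasDerivAt (fun s => K (s, b)) (fderiv ℝ K (a, b) (1, 0)) a := by
  have h : HasDerivAt (fun s : ℝ => (s, b)) ((1 : ℝ), (0 : ℝ)) a :=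
    (hasDerivAt_id a).prodMk (hasDerivAt_const a b)
  exact hK.hasFDerivAt.comp_hasDerivAt a h

lemma secy {K : ℝ × ℝ → ℝ} {a b : ℝ} (hK : DifferentiableAt ℝ K (a, b)) :
    HasDerivAt (fun s => K (a, s)) (fderiv ℝ K (a, b) (0, 1)) b := by
  have h : HasDerivAt (fun s : ℝ => (a, s)) ((0 : ℝ), (1 : ℝ)) b :=
    (hasDerivAt_const b a).prodMk (hasDerivAt_id b)
  exact hK.hasFDerivAt.comp_hasDerivAt b h

lemma sec3x {K : ℝ × ℝ × ℝ → ℝ} {t a b : ℝ} (hK : DifferentiableAt ℝ K (t, a, b)) :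
    HasDerivAt (fun s => K (t, s, b)) (fderiv ℝ K (t, a, b) (0, 1, 0)) a := by
  have h : HasDerivAt (fun s : ℝ => (t, s, b)) ((0 : ℝ), (1 : ℝ), (0 : ℝ)) a :=
    (hasDerivAt_const a t).prodMk ((hasDerivAt_id a).prodMk (hasDerivAt_const a b))
  exact hK.hasFDerivAt.comp_hasDerivAt a h

lemma sec3y {K : ℝ × ℝ × ℝ → ℝ} {t a b : ℝ} (hK : DifferentiableAt ℝ K (t, a, b)) :
    HasDerivAt (fun s => K (t, a, s)) (fderiv ℝ K (t, a, b) (0, 0, 1)) b := by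
  have h : HasDerivAt (fun s : ℝ => (t, a, s)) ((0 : ℝ), (0 : ℝ), (1 : ℝ)) b :=
    (hasDerivAt_const b t).prodMk ((hasDerivAt_const b a).prodMk (hasDerivAt_id b))
  exact hK.hasFDerivAt.comp_hasDerivAt b h

lemma sec3t {K : ℝ × ℝ × ℝ → ℝ} {t a b : ℝ} (hK : DifferentiableAt ℝ K (t, a, b)) :
    HasDerivAt (fun s => K (s, a, b)) (fderiv ℝ K (t, a, b) (1, 0, 0)) t := by
  have h : HasDerivAt (fun s : ℝ => (s, a, b)) ((1 : ℝ), (0 : ℝ), (0 : ℝ)) t :=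
    (hasDerivAt_id t).prodMk ((hasDerivAt_const t a).prodMk (hasDerivAt_const t b))
  exact hK.hasFDerivAt.comp_hasDerivAt t h

lemma decomp2 (L : ℝ × ℝ →L[ℝ] ℝ) (v1 v2 : ℝ) :
    L (v1, v2) = v1 * L (1, 0) + v2 * L (0, 1) := by
  have : ((v1, v2) : ℝ × ℝ) = v1 • ((1 : ℝ), (0 : ℝ)) + v2 • ((0 : ℝ), (1 : ℝ)) := by
    simp [Prod.ext_iff]
  rw [this, map_add, map_smul, map_smul]; simp [smul_eq_mul]

lemma decomp3 (L : ℝ × ℝ × ℝ →L[ℝ] ℝ) (v0 v1 v2 : ℝ) :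
    L (v0, v1, v2) = v0 * L (1, 0, 0) + v1 * L (0, 1, 0) + v2 * L (0, 0, 1) := by
  have : ((v0, v1, v2) : ℝ × ℝ × ℝ)
      = v0 • ((1 : ℝ), (0 : ℝ), (0 : ℝ)) + v1 • ((0 : ℝ), (1 : ℝ), (0 : ℝ))
        + v2 • ((0 : ℝ), (0 : ℝ), (1 : ℝ)) := by
    simp [Prod.ext_iff]
  rw [this, map_add, map_add, map_smul, map_smul, map_smul]; simp [smul_eq_mul]

lemma contDiff_fderiv_apply {K : ℝ × ℝ → ℝ} (hK : ContDiff ℝ 2 K) (v : ℝ × ℝ) :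
    ContDiff ℝ 1 (fun q => fderiv ℝ K q v) :=
  (ContinuousLinearMap.apply ℝ ℝ v).contDiff.comp (hK.fderiv_right (by norm_num))

lemma fderiv_fderiv_apply {K : ℝ × ℝ → ℝ} (hK : ContDiff ℝ 2 K) (v p w : ℝ × ℝ) :
    fderiv ℝ (fun q => fderiv ℝ K q v) p w = fderiv ℝ (fderiv ℝ K) p w v := by
  have hd : DifferentiableAt ℝ (fderiv ℝ K) p :=
    ((hK.fderiv_right (m := 1) (by norm_num)).differentiable one_ne_zero) p
  have h := fderiv_clm_apply (c := fderiv ℝ K) (u := fun _ => v) hd (differentiableAt_const v)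
  rw [h]; simp

lemma chain2 {K : ℝ × ℝ → ℝ} (hK : Differentiable ℝ K) {X1 X2 : ℝ → ℝ} {v1 v2 t : ℝ}
    (h1 : HasDerivAt X1 v1 t) (h2 : HasDerivAt X2 v2 t) (x₁ x₂ : ℝ) :
    HasDerivAt (fun s => K (x₁ - X1 s, x₂ - X2 s))
      (fderiv ℝ K (x₁ - X1 t, x₂ - X2 t) (-v1, -v2)) t := by
  have h : HasDerivAt (fun s : ℝ => (x₁ - X1 s, x₂ - X2 s)) ((-v1 : ℝ), (-v2 : ℝ)) t := by
    have a1 : HasDerivAt (fun s => x₁ - X1 s) (-v1) t := by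
      exact h1.const_sub x₁
    have a2 : HasDerivAt (fun s => x₂ - X2 s) (-v2) t := by
      exact h2.const_sub x₂
    exact a1.prodMk a2
  exact (hK _).hasFDerivAt.comp_hasDerivAt t h

lemma chain3 {K : ℝ × ℝ × ℝ → ℝ} (hK : Differentiable ℝ K) {X1 X2 : ℝ → ℝ} {v1 v2 t : ℝ}
    (h1 : HasDerivAt X1 v1 t) (h2 : HasDerivAt X2 v2 t) (x₁ x₂ : ℝ) :
    HasDerivAt (fun s => K (s, x₁ - X1 s, x₂ - X2 s))
      (fderiv ℝ K (t, x₁ - X1 t, x₂ - X2 t) (1, -v1, -v2)) t := by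
  have h : HasDerivAt (fun s : ℝ => (s, x₁ - X1 s, x₂ - X2 s)) ((1 : ℝ), (-v1 : ℝ), (-v2 : ℝ)) t := by
    have a1 : HasDerivAt (fun s => x₁ - X1 s) (-v1) t := by
      exact h1.const_sub x₁
    have a2 : HasDerivAt (fun s => x₂ - X2 s) (-v2) t := by
      exact h2.const_sub x₂
    exact (hasDerivAt_id t).prodMk (a1.prodMk a2)
  exact (hK _).hasFDerivAt.comp_hasDerivAt t h

lemma shiftchain2 {K : ℝ × ℝ → ℝ} (hK : Differentiable ℝ K) (c d x₂ : ℝ) (x₁ : ℝ) :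
    HasDerivAt (fun s => K (s - c, x₂ - d)) (fderiv ℝ K (x₁ - c, x₂ - d) (1, 0)) x₁ := by
  have h : HasDerivAt (fun s : ℝ => (s - c, x₂ - d)) ((1 : ℝ), (0 : ℝ)) x₁ :=
    ((hasDerivAt_id x₁).sub_const c).prodMk (hasDerivAt_const x₁ (x₂ - d))
  exact (hK _).hasFDerivAt.comp_hasDerivAt x₁ h

lemma shiftchain2y {K : ℝ × ℝ → ℝ} (hK : Differentiable ℝ K) (c d x₁ : ℝ) (x₂ : ℝ) :
    HasDerivAt (fun s => K (x₁ - c, s - d)) (fderiv ℝ K (x₁ - c, x₂ - d) (0, 1)) x₂ := by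
  have h : HasDerivAt (fun s : ℝ => (x₁ - c, s - d)) ((0 : ℝ), (1 : ℝ)) x₂ :=
    (hasDerivAt_const x₂ (x₁ - c)).prodMk ((hasDerivAt_id x₂).sub_const d)
  exact (hK _).hasFDerivAt.comp_hasDerivAt x₂ h

lemma shiftchain3x {K : ℝ × ℝ × ℝ → ℝ} (hK : Differentiable ℝ K) (t c d x₂ : ℝ) (x₁ : ℝ) :
    HasDerivAt (fun s => K (t, s - c, x₂ - d)) (fderiv ℝ K (t, x₁ - c, x₂ - d) (0, 1, 0)) x₁ := by
  have h : HasDerivAt (fun s : ℝ => (t, s - c, x₂ - d)) ((0 : ℝ), (1 : ℝ), (0 : ℝ)) x₁ :=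
    (hasDerivAt_const x₁ t).prodMk (((hasDerivAt_id x₁).sub_const c).prodMk (hasDerivAt_const x₁ (x₂ - d)))
  exact (hK _).hasFDerivAt.comp_hasDerivAt x₁ h

lemma shiftchain3y {K : ℝ × ℝ × ℝ → ℝ} (hK : Differentiable ℝ K) (t c d x₁ : ℝ) (x₂ : ℝ) :
    HasDerivAt (fun s => K (t, x₁ - c, s - d)) (fderiv ℝ K (t, x₁ - c, x₂ - d) (0, 0, 1)) x₂ := by
  have h : HasDerivAt (fun s : ℝ => (t, x₁ - c, s - d)) ((0 : ℝ), (0 : ℝ), (1 : ℝ)) x₂ :=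
    (hasDerivAt_const x₂ t).prodMk ((hasDerivAt_const x₂ (x₁ - c)).prodMk ((hasDerivAt_id x₂).sub_const d))
  exact (hK _).hasFDerivAt.comp_hasDerivAt x₂ h

lemma pdx_eq (g : ℝ → ℝ → ℝ) (hg : Differentiable ℝ (unc2 g)) (a b : ℝ) :
    pdx g a b = fderiv ℝ (unc2 g) (a, b) (1, 0) := (secx (hg (a, b))).deriv

lemma pdy_eq (g : ℝ → ℝ → ℝ) (hg : Differentiable ℝ (unc2 g)) (a b : ℝ) :
    pdy g a b = fderiv ℝ (unc2 g) (a, b) (0, 1) := (secy (hg (a, b))).deriv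

lemma pdx3_eq (g : ℝ → ℝ → ℝ → ℝ) (hg : Differentiable ℝ (unc3 g)) (t a b : ℝ) :
    pdx (g t) a b = fderiv ℝ (unc3 g) (t, a, b) (0, 1, 0) := (sec3x (hg (t, a, b))).deriv

lemma pdy3_eq (g : ℝ → ℝ → ℝ → ℝ) (hg : Differentiable ℝ (unc3 g)) (t a b : ℝ) :
    pdy (g t) a b = fderiv ℝ (unc3 g) (t, a, b) (0, 0, 1) := (sec3y (hg (t, a, b))).deriv

lemma pdt3_eq (g : ℝ → ℝ → ℝ → ℝ) (hg : Differentiable ℝ (unc3 g)) (t a b : ℝ) :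
    deriv (fun s => g s a b) t = fderiv ℝ (unc3 g) (t, a, b) (1, 0, 0) :=
  (sec3t (hg (t, a, b))).deriv

lemma pdx_pdy_eq (g : ℝ → ℝ → ℝ) (hg : ContDiff ℝ 2 (unc2 g)) (a b : ℝ) :
    pdx (fun x y => pdy g x y) a b
      = fderiv ℝ (fun q => fderiv ℝ (unc2 g) q (0, 1)) (a, b) (1, 0) := by
  have hd : Differentiable ℝ (fun q => fderiv ℝ (unc2 g) q ((0 : ℝ), (1 : ℝ))) :=
    (contDiff_fderiv_apply hg _).differentiable one_ne_zero
  show deriv (fun s => pdy g s b) a = _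
  have e : (fun s => pdy g s b) = fun s => fderiv ℝ (unc2 g) (s, b) (0, 1) :=
    funext fun s => pdy_eq g (hg.differentiable (by norm_num)) s b
  rw [e]
  exact (secx (hd (a, b))).deriv

lemma pdy_pdy_eq (g : ℝ → ℝ → ℝ) (hg : ContDiff ℝ 2 (unc2 g)) (a b : ℝ) :
    pdy (fun x y => pdy g x y) a b
      = fderiv ℝ (fun q => fderiv ℝ (unc2 g) q (0, 1)) (a, b) (0, 1) := by
  have hd : Differentiable ℝ (fun q => fderiv ℝ (unc2 g) q ((0 : ℝ), (1 : ℝ))) :=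
    (contDiff_fderiv_apply hg _).differentiable one_ne_zero
  show deriv (fun s => pdy g a s) b = _
  have e : (fun s => pdy g a s) = fun s => fderiv ℝ (unc2 g) (a, s) (0, 1) :=
    funext fun s => pdy_eq g (hg.differentiable (by norm_num)) a s
  rw [e]
  exact (secy (hd (a, b))).deriv

lemma pdx_npdx_eq (g : ℝ → ℝ → ℝ) (hg : ContDiff ℝ 2 (unc2 g)) (a b : ℝ) :
    pdx (fun x y => -(pdx g x y)) a b
      = -(fderiv ℝ (fun q => fderiv ℝ (unc2 g) q (1, 0)) (a, b) (1, 0)) := by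
  have hd : Differentiable ℝ (fun q => fderiv ℝ (unc2 g) q ((1 : ℝ), (0 : ℝ))) :=
    (contDiff_fderiv_apply hg _).differentiable one_ne_zero
  show deriv (fun s => -(pdx g s b)) a = _
  have e : (fun s => -(pdx g s b)) = fun s => -(fderiv ℝ (unc2 g) (s, b) (1, 0)) :=
    funext fun s => by rw [pdx_eq g (hg.differentiable (by norm_num))]
  rw [e]
  exact ((secx (hd (a, b))).neg).deriv

lemma pdy_npdx_eq (g : ℝ → ℝ → ℝ) (hg : ContDiff ℝ 2 (unc2 g)) (a b : ℝ) :
    pdy (fun x y => -(pdx g x y)) a b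
      = -(fderiv ℝ (fun q => fderiv ℝ (unc2 g) q (1, 0)) (a, b) (0, 1)) := by
  have hd : Differentiable ℝ (fun q => fderiv ℝ (unc2 g) q ((1 : ℝ), (0 : ℝ))) :=
    (contDiff_fderiv_apply hg _).differentiable one_ne_zero
  show deriv (fun s => -(pdx g a s)) b = _
  have e : (fun s => -(pdx g a s)) = fun s => -(fderiv ℝ (unc2 g) (a, s) (1, 0)) :=
    funext fun s => by rw [pdx_eq g (hg.differentiable (by norm_num))]
  rw [e]
  exact ((secy (hd (a, b))).neg).deriv

lemma mixed_symm (g : ℝ → ℝ → ℝ) (hg : ContDiff ℝ 2 (unc2 g)) (a b : ℝ) :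
    fderiv ℝ (fun q => fderiv ℝ (unc2 g) q (0, 1)) (a, b) (1, 0)
      = fderiv ℝ (fun q => fderiv ℝ (unc2 g) q (1, 0)) (a, b) (0, 1) := by
  rw [fderiv_fderiv_apply hg, fderiv_fderiv_apply hg]
  exact (hg.contDiffAt.isSymmSndFDerivAt (by norm_num)) _ _
/-- Theorem 1 of the paper: a steady vortex `u = ∇⊥Φ` with steady pressure `π₀`,
transported bearing field `π₁` and trajectory `X(t)` solving the center equation
combine into an exact solution `U(t,x) = Ẋ(t) + u(x−X(t))`,
`π(t,x) = π₀(x−X(t)) + π₁(t,x−X(t))` of the compressible system with source `Q`. -/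
theorem frozen_vortex_exact_solution
    (Φ π₀ : ℝ → ℝ → ℝ) (π₁ : ℝ → ℝ → ℝ → ℝ)
    (X1 X2 : ℝ → ℝ) (l : ℝ → ℝ → ℝ)
    (a11 a12 a21 a22 : ℝ → ℝ → ℝ) (c₀ γ : ℝ)
    (hc : 0 < c₀) (hγ : 1 < γ)
    (hΦ : ContDiff ℝ 2 (fun q : ℝ × ℝ => Φ q.1 q.2))
    (hπ₀ : ContDiff ℝ 2 (fun q : ℝ × ℝ => π₀ q.1 q.2))
    (hπ₁ : ContDiff ℝ 2 (fun q : ℝ × ℝ × ℝ => π₁ q.1 q.2.1 q.2.2))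
    (hX1 : ContDiff ℝ 2 X1) (hX2 : ContDiff ℝ 2 X2)
    (hl : ContDiff ℝ (⊤ : ℕ∞) (fun q : ℝ × ℝ => l q.1 q.2))
    (hA : ContDiff ℝ (⊤ : ℕ∞) (fun q : ℝ × ℝ =>
      (a11 q.1 q.2, a12 q.1 q.2, a21 q.1 q.2, a22 q.1 q.2)))
    -- the steady equation (∇⊥Φ·∇)∇⊥Φ + A∇⊥Φ + c₀∇π₀ = 0
    (hsteady1 : ∀ a b : ℝ,
      pdy Φ a b * pdx (fun x y => pdy Φ x y) a b
        + (-(pdx Φ a b)) * pdy (fun x y => pdy Φ x y) a b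
        + (a11 a b * pdy Φ a b + a12 a b * (-(pdx Φ a b)))
        + c₀ * pdx π₀ a b = 0)
    (hsteady2 : ∀ a b : ℝ,
      pdy Φ a b * pdx (fun x y => -(pdx Φ x y)) a b
        + (-(pdx Φ a b)) * pdy (fun x y => -(pdx Φ x y)) a b
        + (a21 a b * pdy Φ a b + a22 a b * (-(pdx Φ a b)))
        + c₀ * pdy π₀ a b = 0)
    -- the orthogonality constraint (∇π₀, ∇⊥Φ) = 0
    (horth : ∀ a b : ℝ,
      pdx π₀ a b * pdy Φ a b + pdy π₀ a b * (-(pdx Φ a b)) = 0)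
    -- π₁ solves the transport equation ∂ₜπ₁ + (∇⊥Φ·∇)π₁ = 0
    (htrans : ∀ t a b : ℝ,
      deriv (fun s => π₁ s a b) t
        + pdy Φ a b * pdx (π₁ t) a b + (-(pdx Φ a b)) * pdy (π₁ t) a b = 0)
    -- the trajectory equation Ẍ + l(X)LẊ + c₀∇π₁(t,·)|₀ = 0
    (hX1eq : ∀ t : ℝ,
      deriv (deriv X1) t - l (X1 t) (X2 t) * deriv X2 t + c₀ * pdx (π₁ t) 0 0 = 0)
    (hX2eq : ∀ t : ℝ,
      deriv (deriv X2) t + l (X1 t) (X2 t) * deriv X1 t + c₀ * pdy (π₁ t) 0 0 = 0) :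
    -- conclusion: (U, π) solves the system with source Q
    (let U1 : ℝ → ℝ → ℝ → ℝ := fun t a b =>
      deriv X1 t + pdy Φ (a - X1 t) (b - X2 t)
    let U2 : ℝ → ℝ → ℝ → ℝ := fun t a b =>
      deriv X2 t + (-(pdx Φ (a - X1 t) (b - X2 t)))
    let pr : ℝ → ℝ → ℝ → ℝ := fun t a b =>
      π₀ (a - X1 t) (b - X2 t) + π₁ t (a - X1 t) (b - X2 t)
    let Q1 : ℝ → ℝ → ℝ → ℝ := fun t a b =>
      -(l (X1 t) (X2 t) - l a b) * (-(deriv X2 t))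
        + (l a b * (-(-(pdx Φ (a - X1 t) (b - X2 t))))
            - (a11 (a - X1 t) (b - X2 t) * pdy Φ (a - X1 t) (b - X2 t)
              + a12 (a - X1 t) (b - X2 t) * (-(pdx Φ (a - X1 t) (b - X2 t)))))
        - c₀ * (pdx (π₁ t) 0 0 - pdx (π₁ t) (a - X1 t) (b - X2 t))
    let Q2 : ℝ → ℝ → ℝ → ℝ := fun t a b =>
      -(l (X1 t) (X2 t) - l a b) * (deriv X1 t)
        + (l a b * pdy Φ (a - X1 t) (b - X2 t)
            - (a21 (a - X1 t) (b - X2 t) * pdy Φ (a - X1 t) (b - X2 t)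
              + a22 (a - X1 t) (b - X2 t) * (-(pdx Φ (a - X1 t) (b - X2 t)))))
        - c₀ * (pdy (π₁ t) 0 0 - pdy (π₁ t) (a - X1 t) (b - X2 t))
    ∀ t x₁ x₂ : ℝ,
      (deriv (fun s => U1 s x₁ x₂) t
        + U1 t x₁ x₂ * pdx (U1 t) x₁ x₂ + U2 t x₁ x₂ * pdy (U1 t) x₁ x₂
        + l x₁ x₂ * (-(U2 t x₁ x₂)) + c₀ * pdx (pr t) x₁ x₂ = Q1 t x₁ x₂) ∧
      (deriv (fun s => U2 s x₁ x₂) t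
        + U1 t x₁ x₂ * pdx (U2 t) x₁ x₂ + U2 t x₁ x₂ * pdy (U2 t) x₁ x₂
        + l x₁ x₂ * (U1 t x₁ x₂) + c₀ * pdy (pr t) x₁ x₂ = Q2 t x₁ x₂) ∧
      (deriv (fun s => pr s x₁ x₂) t
        + pdx (pr t) x₁ x₂ * U1 t x₁ x₂ + pdy (pr t) x₁ x₂ * U2 t x₁ x₂
        + (γ - 1) * pr t x₁ x₂ * (pdx (U1 t) x₁ x₂ + pdy (U2 t) x₁ x₂) = 0)) := by
  intro U1 U2 pr Q1 Q2 t x₁ x₂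
  simp only [U1, U2, pr, Q1, Q2]
  clear U1 U2 pr Q1 Q2
  -- basic regularity facts
  have hΦ' : ContDiff ℝ 2 (unc2 Φ) := hΦ
  have hπ₀' : ContDiff ℝ 2 (unc2 π₀) := hπ₀
  have hπ₁' : ContDiff ℝ 2 (unc3 π₁) := hπ₁
  have hFdiff : Differentiable ℝ (unc2 Φ) := hΦ'.differentiable (by norm_num)
  have hPd : Differentiable ℝ (unc2 π₀) := hπ₀'.differentiable (by norm_num)
  have hGd : Differentiable ℝ (unc3 π₁) := hπ₁'.differentiable (by norm_num)
  have hF2d : Differentiable ℝ (fun q => fderiv ℝ (unc2 Φ) q ((0 : ℝ), (1 : ℝ))) :=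
    (contDiff_fderiv_apply hΦ' _).differentiable one_ne_zero
  have hF1d : Differentiable ℝ (fun q => fderiv ℝ (unc2 Φ) q ((1 : ℝ), (0 : ℝ))) :=
    (contDiff_fderiv_apply hΦ' _).differentiable one_ne_zero
  have h1 : HasDerivAt X1 (deriv X1 t) t := ((hX1.differentiable (by norm_num)) t).hasDerivAt
  have h2 : HasDerivAt X2 (deriv X2 t) t := ((hX2.differentiable (by norm_num)) t).hasDerivAt
  have e2 : (2 : WithTop ℕ∞) = 1 + 1 := by norm_num
  have hX1two : ContDiff ℝ (1 + 1) X1 := by rw [← e2]; exact hX1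
  have hX2two : ContDiff ℝ (1 + 1) X2 := by rw [← e2]; exact hX2
  have hdd1 : HasDerivAt (deriv X1) (deriv (deriv X1) t) t :=
    (((contDiff_succ_iff_deriv.mp hX1two).2.2.differentiable one_ne_zero) t).hasDerivAt
  have hdd2 : HasDerivAt (deriv X2) (deriv (deriv X2) t) t :=
    (((contDiff_succ_iff_deriv.mp hX2two).2.2.differentiable one_ne_zero) t).hasDerivAt
  -- the derivative computations
  have A1 : deriv (fun s => deriv X1 s + pdy Φ (x₁ - X1 s) (x₂ - X2 s)) t
      = deriv (deriv X1) t
        + fderiv ℝ (fun q => fderiv ℝ (unc2 Φ) q (0, 1)) (x₁ - X1 t, x₂ - X2 t)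
            (-(deriv X1 t), -(deriv X2 t)) := by
    have e : (fun s => deriv X1 s + pdy Φ (x₁ - X1 s) (x₂ - X2 s))
        = fun s => deriv X1 s + fderiv ℝ (unc2 Φ) (x₁ - X1 s, x₂ - X2 s) (0, 1) :=
      funext fun s => by rw [pdy_eq Φ hFdiff]
    rw [e]
    exact (hdd1.add (chain2 hF2d h1 h2 x₁ x₂)).deriv
  have A2 : pdx (fun a b => deriv X1 t + pdy Φ (a - X1 t) (b - X2 t)) x₁ x₂
      = fderiv ℝ (fun q => fderiv ℝ (unc2 Φ) q (0, 1)) (x₁ - X1 t, x₂ - X2 t) (1, 0) := by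
    show deriv (fun s => deriv X1 t + pdy Φ (s - X1 t) (x₂ - X2 t)) x₁ = _
    have e : (fun s => deriv X1 t + pdy Φ (s - X1 t) (x₂ - X2 t))
        = fun s => deriv X1 t + fderiv ℝ (unc2 Φ) (s - X1 t, x₂ - X2 t) (0, 1) :=
      funext fun s => by rw [pdy_eq Φ hFdiff]
    rw [e]
    rw [deriv_const_add]; exact (shiftchain2 hF2d (X1 t) (X2 t) x₂ x₁).deriv
  have A3 : pdy (fun a b => deriv X1 t + pdy Φ (a - X1 t) (b - X2 t)) x₁ x₂
      = fderiv ℝ (fun q => fderiv ℝ (unc2 Φ) q (0, 1)) (x₁ - X1 t, x₂ - X2 t) (0, 1) := by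
    show deriv (fun s => deriv X1 t + pdy Φ (x₁ - X1 t) (s - X2 t)) x₂ = _
    have e : (fun s => deriv X1 t + pdy Φ (x₁ - X1 t) (s - X2 t))
        = fun s => deriv X1 t + fderiv ℝ (unc2 Φ) (x₁ - X1 t, s - X2 t) (0, 1) :=
      funext fun s => by rw [pdy_eq Φ hFdiff]
    rw [e]
    rw [deriv_const_add]; exact (shiftchain2y hF2d (X1 t) (X2 t) x₁ x₂).deriv
  have A4 : deriv (fun s => deriv X2 s + -(pdx Φ (x₁ - X1 s) (x₂ - X2 s))) t
      = deriv (deriv X2) t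
        + -(fderiv ℝ (fun q => fderiv ℝ (unc2 Φ) q (1, 0)) (x₁ - X1 t, x₂ - X2 t)
            (-(deriv X1 t), -(deriv X2 t))) := by
    have e : (fun s => deriv X2 s + -(pdx Φ (x₁ - X1 s) (x₂ - X2 s)))
        = fun s => deriv X2 s + -(fderiv ℝ (unc2 Φ) (x₁ - X1 s, x₂ - X2 s) (1, 0)) :=
      funext fun s => by rw [pdx_eq Φ hFdiff]
    rw [e]
    exact (hdd2.add ((chain2 hF1d h1 h2 x₁ x₂).neg)).deriv
  have A5 : pdx (fun a b => deriv X2 t + -(pdx Φ (a - X1 t) (b - X2 t))) x₁ x₂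
      = -(fderiv ℝ (fun q => fderiv ℝ (unc2 Φ) q (1, 0)) (x₁ - X1 t, x₂ - X2 t) (1, 0)) := by
    show deriv (fun s => deriv X2 t + -(pdx Φ (s - X1 t) (x₂ - X2 t))) x₁ = _
    have e : (fun s => deriv X2 t + -(pdx Φ (s - X1 t) (x₂ - X2 t)))
        = fun s => deriv X2 t + -(fderiv ℝ (unc2 Φ) (s - X1 t, x₂ - X2 t) (1, 0)) :=
      funext fun s => by rw [pdx_eq Φ hFdiff]
    rw [e]
    have := ((hasDerivAt_const x₁ (deriv X2 t)).add ((shiftchain2 hF1d (X1 t) (X2 t) x₂ x₁).neg)).deriv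
    simpa [Pi.add_def] using this
  have A6 : pdy (fun a b => deriv X2 t + -(pdx Φ (a - X1 t) (b - X2 t))) x₁ x₂
      = -(fderiv ℝ (fun q => fderiv ℝ (unc2 Φ) q (1, 0)) (x₁ - X1 t, x₂ - X2 t) (0, 1)) := by
    show deriv (fun s => deriv X2 t + -(pdx Φ (x₁ - X1 t) (s - X2 t))) x₂ = _
    have e : (fun s => deriv X2 t + -(pdx Φ (x₁ - X1 t) (s - X2 t)))
        = fun s => deriv X2 t + -(fderiv ℝ (unc2 Φ) (x₁ - X1 t, s - X2 t) (1, 0)) :=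
      funext fun s => by rw [pdx_eq Φ hFdiff]
    rw [e]
    have := ((hasDerivAt_const x₂ (deriv X2 t)).add ((shiftchain2y hF1d (X1 t) (X2 t) x₁ x₂).neg)).deriv
    simpa [Pi.add_def] using this
  have A7 : deriv (fun s => π₀ (x₁ - X1 s) (x₂ - X2 s) + π₁ s (x₁ - X1 s) (x₂ - X2 s)) t
      = fderiv ℝ (unc2 π₀) (x₁ - X1 t, x₂ - X2 t) (-(deriv X1 t), -(deriv X2 t))
        + fderiv ℝ (unc3 π₁) (t, x₁ - X1 t, x₂ - X2 t) (1, -(deriv X1 t), -(deriv X2 t)) :=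
    ((chain2 hPd h1 h2 x₁ x₂).add (chain3 hGd h1 h2 x₁ x₂)).deriv
  have A8 : pdx (fun a b => π₀ (a - X1 t) (b - X2 t) + π₁ t (a - X1 t) (b - X2 t)) x₁ x₂
      = fderiv ℝ (unc2 π₀) (x₁ - X1 t, x₂ - X2 t) (1, 0)
        + fderiv ℝ (unc3 π₁) (t, x₁ - X1 t, x₂ - X2 t) (0, 1, 0) :=
    ((shiftchain2 hPd (X1 t) (X2 t) x₂ x₁).add (shiftchain3x hGd t (X1 t) (X2 t) x₂ x₁)).deriv
  have A9 : pdy (fun a b => π₀ (a - X1 t) (b - X2 t) + π₁ t (a - X1 t) (b - X2 t)) x₁ x₂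
      = fderiv ℝ (unc2 π₀) (x₁ - X1 t, x₂ - X2 t) (0, 1)
        + fderiv ℝ (unc3 π₁) (t, x₁ - X1 t, x₂ - X2 t) (0, 0, 1) :=
    ((shiftchain2y hPd (X1 t) (X2 t) x₁ x₂).add (shiftchain3y hGd t (X1 t) (X2 t) x₁ x₂)).deriv
  -- converted hypothesis instances
  have HS1 := hsteady1 (x₁ - X1 t) (x₂ - X2 t)
  rw [pdx_pdy_eq Φ hΦ', pdy_pdy_eq Φ hΦ', pdx_eq π₀ hPd] at HS1
  have HS2 := hsteady2 (x₁ - X1 t) (x₂ - X2 t)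
  rw [pdx_npdx_eq Φ hΦ', pdy_npdx_eq Φ hΦ', pdy_eq π₀ hPd] at HS2
  have HX1 := hX1eq t
  rw [pdx3_eq π₁ hGd] at HX1
  have HX2 := hX2eq t
  rw [pdy3_eq π₁ hGd] at HX2
  have HT := htrans t (x₁ - X1 t) (x₂ - X2 t)
  rw [pdt3_eq π₁ hGd, pdx3_eq π₁ hGd, pdy3_eq π₁ hGd] at HT
  have HO := horth (x₁ - X1 t) (x₂ - X2 t)
  rw [pdx_eq π₀ hPd, pdy_eq π₀ hPd] at HO
  have HSym := mixed_symm Φ hΦ' (x₁ - X1 t) (x₂ - X2 t)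
  refine ⟨?_, ?_, ?_⟩
  · rw [A1, A2, A3, A8]
    simp only [pdx3_eq π₁ hGd]
    rw [decomp2 (fderiv ℝ (fun q => fderiv ℝ (unc2 Φ) q (0, 1)) (x₁ - X1 t, x₂ - X2 t))
      (-(deriv X1 t)) (-(deriv X2 t))]
    linear_combination HS1 + HX1
  · rw [A4, A5, A6, A9]
    simp only [pdy3_eq π₁ hGd]
    rw [decomp2 (fderiv ℝ (fun q => fderiv ℝ (unc2 Φ) q (1, 0)) (x₁ - X1 t, x₂ - X2 t))
      (-(deriv X1 t)) (-(deriv X2 t))]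
    linear_combination HS2 + HX2
  · rw [A7, A8, A9, A2, A6]
    rw [decomp2 (fderiv ℝ (unc2 π₀) (x₁ - X1 t, x₂ - X2 t)) (-(deriv X1 t)) (-(deriv X2 t))]
    rw [decomp3 (fderiv ℝ (unc3 π₁) (t, x₁ - X1 t, x₂ - X2 t)) 1 (-(deriv X1 t)) (-(deriv X2 t))]
    linear_combination HT + HO
      + (γ - 1) * (π₀ (x₁ - X1 t) (x₂ - X2 t) + π₁ t (x₁ - X1 t) (x₂ - X2 t)) * HSym
end
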